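/- arXiv:2108.08661 — 4 statements merged into one kernel-verified Lean document; each statement's English description precedes it below -/
import Mathlib

section
/- The number of parking functions of size n is (n+1)^(n-1). -/
/-- A parking function of size `n`, encoded as `f : Fin n → Fin n` (so value `f j`
represents the parking place `(f j : ℕ) + 1 ∈ {1,…,n}`): its nondecreasing
rearrangement `f'` satisfies `f' i ≤ i`, equivalently for every `i`, at least `i + 1`
of the values are `≤ i`. -/
def IsParkingFun (n : ℕ) (f : Fin n → Fin n) : Prop :=
  ∀ i : Fin n, (i : ℕ) + 1 ≤ (Finset.univ.filter (fun j => f j ≤ i)).card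

/-!
Pollak's circular argument. Read `g : Fin n → ZMod (n + 1)` as `n` cars with preferred spots on a
circular street of `n + 1` spots, and let `q t` be the number of cars preferring `t`. Adding a
constant `c` to `g` rotates the street, and `g + c` is a parking function (with values in the first
`n` spots) exactly when the partial sums of `q - 1`, read from `-c`, are nonnegative up to length
`n`. Since `q - 1` sums to `-1` around the circle, the cycle lemma gives exactly one such `c`. So
the `(n + 1) ^ n` functions split into `n + 1`-element orbits, each containing exactly one parking
function.
-/

open Finset

theorem ZMod.sum_range_natCast {M : Type*} [AddCommMonoid M] (m : ℕ) [NeZero m]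
    (f : ZMod m → M) : ∑ i ∈ range m, f i = ∑ t, f t := by
  refine sum_nbij' (↑) ZMod.val ?_ ?_ ?_ ?_ ?_ <;>
    simp +contextual [ZMod.val_lt, Nat.mod_eq_of_lt]

section CycleLemma

variable {n : ℕ} {S : ℕ → ℤ}

theorem exists_lt_forall_le_add_succ (hS : ∀ v, S (v + (n + 1)) = S v - 1) :
    ∃ u < n + 1, ∀ k < n, S u ≤ S (u + k + 1) := by
  obtain ⟨v, hv, hv_min⟩ := (range (n + 1)).exists_min_image S ⟨0, by simp⟩
  rw [mem_range] at hv
  have hex : ∃ u, S u ≤ S v := ⟨v, le_rfl⟩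
  -- `u` is the first index at which `S` reaches its minimum over one period; the indices that
  -- wrap around lie one period after indices before `u`, where `S` is strictly larger
  set u := Nat.find hex
  have hu : S u ≤ S v := Nat.find_spec hex
  have huv : u ≤ v := Nat.find_min' hex le_rfl
  refine ⟨u, by omega, fun k hk => ?_⟩
  rcases le_or_gt (u + k + 1) n with hw | hw
  · exact hu.trans (hv_min _ (mem_range.mpr (by omega)))
  · have hprev : S v < S (u + k - n) := not_le.mp (Nat.find_min hex (by omega))
    rw [show u + k + 1 = u + k - n + (n + 1) by omega, hS]
    omega

theorem eq_of_forall_le_add_succ (hS : ∀ v, S (v + (n + 1)) = S v - 1) {u u' : ℕ}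
    (hu : u < n + 1) (hu' : u' < n + 1) (h : ∀ k < n, S u ≤ S (u + k + 1))
    (h' : ∀ k < n, S u' ≤ S (u' + k + 1)) : u = u' := by
  wlog hle : u ≤ u' generalizing u u'
  · exact (this hu' hu h' h (by omega)).symm
  by_contra hne
  have h₁ := h (u' - u - 1) (by omega)
  have h₂ := h' (u + n - u') (by omega)
  rw [show u + (u' - u - 1) + 1 = u' by omega] at h₁
  rw [show u' + (u + n - u') + 1 = u + (n + 1) by omega, hS] at h₂
  omega

/-- Raney's cycle lemma. -/
theorem existsUnique_forall_sum_range_nonneg (a : ZMod (n + 1) → ℤ) (ha : ∑ t, a t = -1) :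
    ∃! u : ZMod (n + 1), ∀ k < n, 0 ≤ ∑ i ∈ range (k + 1), a (u + i) := by
  set S : ℕ → ℤ := fun v => ∑ i ∈ range v, a i
  have window (u k : ℕ) : ∑ i ∈ range k, a (u + i) = S (u + k) - S u := by
    simp only [S, sum_range_add, Nat.cast_add]
    ring
  have hS (v : ℕ) : S (v + (n + 1)) = S v - 1 := by
    have hperiod : ∑ t, a t = S (v + (n + 1)) - S v := by
      rw [← window, ZMod.sum_range_natCast (n + 1) (fun t => a (v + t))]
      exact (Equiv.sum_comp (Equiv.addLeft _) a).symm
    linarith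
  have good_iff (u : ZMod (n + 1)) : (∀ k < n, 0 ≤ ∑ i ∈ range (k + 1), a (u + i)) ↔
      ∀ k < n, S u.val ≤ S (u.val + k + 1) := by
    refine forall₂_congr fun k _ => ?_
    rw [add_assoc, ← sub_nonneg (b := S u.val), ← window, ZMod.natCast_zmod_val]
  obtain ⟨u, hu, hgood⟩ := exists_lt_forall_le_add_succ hS
  refine ⟨u, (good_iff _).mpr ?_, fun u' hu' => ?_⟩
  · rwa [ZMod.val_cast_of_lt hu]
  · rw [← ZMod.natCast_zmod_val u', eq_of_forall_le_add_succ hS (ZMod.val_lt u') hu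
      ((good_iff u').mp hu') hgood]

end CycleLemma

section OrbitCounting

variable {G X : Type*} [AddGroup G] [AddAction G X]

theorem Nat.card_eq_card_mul_card_of_existsUnique_vadd (P : X → Prop)
    (h : ∀ x, ∃! c : G, P (c +ᵥ x)) : Nat.card X = Nat.card G * Nat.card {x // P x} := by
  rw [← Nat.card_prod]
  refine (Nat.card_congr
    (Equiv.ofBijective (fun p : G × {x // P x} => p.1 +ᵥ p.2.1) ⟨?_, ?_⟩)).symm
  · rintro ⟨c, x, hx⟩ ⟨c', x', hx'⟩ (hxx' : c +ᵥ x = c' +ᵥ x')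
    have hx'_eq : x' = (-c' + c) +ᵥ x := by rw [add_vadd, hxx', neg_vadd_vadd]
    have hcc' : -c' + c = 0 := (h x).unique (by rwa [← hx'_eq]) (by rwa [zero_vadd])
    obtain rfl : c = c' := (neg_add_eq_zero.mp hcc').symm
    obtain rfl : x = x' := vadd_left_cancel c hxx'
    rfl
  · intro y
    obtain ⟨c, hc, -⟩ := h y
    exact ⟨⟨-c, c +ᵥ y, hc⟩, neg_vadd_vadd c y⟩

end OrbitCounting

section ParkingMod

variable {n : ℕ}

def IsParkingFunMod (g : Fin n → ZMod (n + 1)) : Prop :=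
  ∀ k < n, k + 1 ≤ #{j | (g j).val ≤ k}

theorem isParkingFun_iff_isParkingFunMod (f : Fin n → Fin n) :
    IsParkingFun n f ↔ IsParkingFunMod (fun j => ((f j : ℕ) : ZMod (n + 1))) := by
  have hval (j : Fin n) : ((f j : ℕ) : ZMod (n + 1)).val = f j :=
    ZMod.val_cast_of_lt (Nat.lt_succ_of_lt (f j).isLt)
  simp only [IsParkingFun, IsParkingFunMod, Fin.forall_iff, Fin.le_def, hval]

theorem IsParkingFunMod.val_lt {g : Fin n → ZMod (n + 1)} (hg : IsParkingFunMod g) (j : Fin n) :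
    (g j).val < n := by
  have hn : 0 < n := j.pos
  have hall : #{j | (g j).val ≤ n - 1} = #(univ : Finset (Fin n)) :=
    le_antisymm (card_filter_le _ _)
      (by simpa [Nat.sub_add_cancel hn] using hg (n - 1) (by omega))
  have := card_filter_eq_iff.mp hall j (mem_univ j)
  omega

theorem card_isParkingFun_eq_card_isParkingFunMod :
    Nat.card {f : Fin n → Fin n // IsParkingFun n f} =
      Nat.card {g : Fin n → ZMod (n + 1) // IsParkingFunMod g} := by
  refine Nat.card_congr (Equiv.ofBijective
    (fun f => ⟨_, (isParkingFun_iff_isParkingFunMod f.1).mp f.2⟩) ⟨?_, ?_⟩)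
  · rintro ⟨f, _⟩ ⟨f', _⟩ hff'
    ext j
    have := congrArg (fun g : Fin n → ZMod (n + 1) => (g j).val) (congrArg Subtype.val hff')
    simpa [ZMod.val_cast_of_lt (Nat.lt_succ_of_lt (f j).isLt),
      ZMod.val_cast_of_lt (Nat.lt_succ_of_lt (f' j).isLt)] using this
  · rintro ⟨g, hg⟩
    have hcast : (fun j => (((⟨(g j).val, hg.val_lt j⟩ : Fin n) : ℕ) : ZMod (n + 1))) = g :=
      funext fun j => ZMod.natCast_zmod_val (g j)
    exact ⟨⟨_, (isParkingFun_iff_isParkingFunMod _).mpr (by convert hg)⟩, Subtype.ext hcast⟩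

theorem card_filter_val_le_eq_sum_range {ι : Type*} [Fintype ι] (h : ι → ZMod (n + 1)) {k : ℕ}
    (hk : k < n + 1) : #{j | (h j).val ≤ k} = ∑ i ∈ range (k + 1), #{j | h j = i} := by
  have hfiber : ∀ i ∈ range (k + 1), #{j | h j = i} = #{j | (h j).val = i} := by
    intro i hi
    refine congrArg card (filter_congr fun j _ => ⟨fun hj => ?_, fun hj => ?_⟩)
    · rw [hj, ZMod.val_cast_of_lt (by rw [mem_range] at hi; omega)]
    · rw [← hj, ZMod.natCast_zmod_val]
  rw [sum_congr rfl hfiber, sum_card_fiberwise_eq_card_filter]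
  simp only [mem_range, Nat.lt_succ_iff]

theorem isParkingFunMod_vadd_iff (g : Fin n → ZMod (n + 1)) (c : ZMod (n + 1)) :
    IsParkingFunMod (c +ᵥ g) ↔
      ∀ k < n, 0 ≤ ∑ i ∈ range (k + 1), ((#{j | g j = -c + i} : ℤ) - 1) := by
  refine forall₂_congr fun k hk => ?_
  have hfiber (i : ℕ) : #{j | (c +ᵥ g) j = i} = #{j | g j = -c + i} := by
    simp only [Pi.vadd_apply, vadd_eq_add, eq_neg_add_iff_add_eq]
  rw [card_filter_val_le_eq_sum_range _ (by omega), sum_sub_distrib, sub_nonneg]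
  simp only [hfiber, sum_const, card_range, nsmul_eq_mul, mul_one]
  norm_cast

theorem existsUnique_isParkingFunMod_vadd (g : Fin n → ZMod (n + 1)) :
    ∃! c : ZMod (n + 1), IsParkingFunMod (c +ᵥ g) := by
  have hsum : ∑ t, ((#{j | g j = t} : ℤ) - 1) = -1 := by
    have := card_eq_sum_card_fiberwise (f := g) (s := univ) (t := univ) (fun _ _ => mem_univ _)
    rw [sum_sub_distrib, ← Nat.cast_sum, ← this]
    simp
  refine ((Equiv.neg _).existsUnique_congr fun u => ?_).mp
    (existsUnique_forall_sum_range_nonneg _ hsum)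
  rw [isParkingFunMod_vadd_iff, Equiv.neg_apply, neg_neg]

end ParkingMod

theorem card_parking_functions_general (n : ℕ) :
    Nat.card {f : Fin n → Fin n // IsParkingFun n f} = (n + 1) ^ (n - 1) := by
  have hcount := Nat.card_eq_card_mul_card_of_existsUnique_vadd _
    (existsUnique_isParkingFunMod_vadd (n := n))
  rw [Nat.card_fun, Nat.card_zmod, Nat.card_fin,
    ← card_isParkingFun_eq_card_isParkingFunMod] at hcount
  refine Nat.eq_of_mul_eq_mul_left n.succ_pos (hcount.symm.trans ?_)
  rcases n with _ | n <;> simp [pow_succ']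

/-- The number of parking functions of size `n` is `(n+1)^(n-1)`. -/
theorem card_parking_functions (n : ℕ) (hn : 1 ≤ n) :
    Nat.card {f : Fin n → Fin n // IsParkingFun n f} = (n + 1) ^ (n - 1) :=
  card_parking_functions_general n
end

section
/- Let ξ_1,...,ξ_n be i.i.d. random variables taking values in ℕ ∪ {−1}, let S_j = ξ_1 + ... + ξ_j, and let F: ℝⁿ → [0,∞) be a measurable function invariant under cyclic shifts of its arguments. Then E[F(ξ_1,...,ξ_n) · 1_{S_1 > 0, ..., S_n > 0}] ≤ (1/n) · E[F(ξ_1,...,ξ_n) · min(S_n, n) · 1_{S_n > 0}]. -/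
/-!
Let `T j` be the partial sums of the periodic extension of `x : Fin n → ℤ`, so that
`T (j + n) = T j + s` with `s = ∑ x`. The rotation of `x` by `i` has all partial sums positive
iff `T i < T (i + k)` for `k = 1, …, n`. Along such indices `T` is strictly increasing and takes
values in `[T i₀, T i₀ + s)` (with `i₀` the first of them), so there are at most `min s n` of
them, and none if `s ≤ 0`. Both the law of `(ξ 0, …, ξ (n - 1))` and `F` are invariant under
rotations, so each of the `n` rotations contributes the same expectation as the identity;
summing over rotations and counting gives the bound.
-/

open MeasureTheory ProbabilityTheory Finset
-- `(l : Fin n)` for `l : ℕ` is `l % n`, so `x l` reads the periodic extension of `x`.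
open Fin.NatCast

theorem card_le_toNat_of_forall_lt_add {n : ℕ} {T : ℕ → ℤ} {s : ℤ}
    (hT : ∀ j, T (j + n) = T j + s) {G : Finset (Fin n)}
    (hG : ∀ i ∈ G, ∀ k ∈ Icc 1 n, T i < T (i + k)) : #G ≤ s.toNat := by
  obtain rfl | hne := G.eq_empty_or_nonempty
  · simp
  have hmono : StrictMonoOn (fun i : Fin n => T i) G := by
    intro i hi j hj hij
    have := hG i hi (j - i) (mem_Icc.mpr ⟨by omega, by omega⟩)
    rwa [Nat.add_sub_cancel' hij.le] at this
  set i₀ := G.min' hne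
  have hrange : ∀ i ∈ G, T i ∈ Ico (T i₀) (T i₀ + s) := by
    intro i hi
    have hle : i₀ ≤ i := G.min'_le i hi
    refine mem_Ico.mpr ⟨hmono.monotoneOn (G.min'_mem hne) hi hle, ?_⟩
    have := hG i hi (i₀ + n - i) (mem_Icc.mpr ⟨by omega, by omega⟩)
    rwa [Nat.add_sub_cancel' (by omega), hT] at this
  calc #G = #(G.image fun i : Fin n => T i) := (card_image_of_injOn hmono.injOn).symm
    _ ≤ #(Ico (T i₀) (T i₀ + s)) := card_le_card fun _ h => by
        obtain ⟨i, hi, rfl⟩ := mem_image.mp h; exact hrange i hi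
    _ = s.toNat := by simp

theorem setIntegral_preimage_of_map_eq {α E : Type*} [MeasurableSpace α]
    [NormedAddCommGroup E] [NormedSpace ℝ E] {ρ : Measure α} {g : α → α}
    (hg : AEMeasurable g ρ) (hρ : ρ.map g = ρ)
    {s : Set α} (hs : MeasurableSet s) {F : α → E} (hF : AEStronglyMeasurable F ρ)
    (hFg : ∀ x, F (g x) = F x) :
    ∫ x in g ⁻¹' s, F x ∂ρ = ∫ x in s, F x ∂ρ := by
  conv_rhs => rw [← hρ]
  rw [setIntegral_map hs (by rwa [hρ]) hg]
  simp only [hFg]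

namespace ProbabilityTheory

theorem iIndepFun.map_precomp_eq_of_identDistrib {Ω ι κ β : Type*} [MeasurableSpace Ω]
    [MeasurableSpace β] [Fintype ι] {μ : Measure Ω} {ξ : κ → Ω → β} (hindep : iIndepFun ξ μ)
    (hident : ∀ i j, IdentDistrib (ξ i) (ξ j) μ μ) {g g' : ι → κ} (hg : g.Injective)
    (hg' : g'.Injective) :
    μ.map (fun ω j => ξ (g j) ω) = μ.map (fun ω j => ξ (g' j) ω) := by
  have hae (k : κ) : AEMeasurable (ξ k) μ := (hident k k).aemeasurable_fst
  rw [(hindep.precomp hg).map_fun_eq_pi_map (hae <| g ·),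
    (hindep.precomp hg').map_fun_eq_pi_map (hae <| g' ·)]
  congr 1
  funext j
  exact (hident _ _).map_eq

end ProbabilityTheory

section Rotation

variable {n : ℕ} [NeZero n]

def PartialSumsPos (x : Fin n → ℤ) : Prop :=
  ∀ k ∈ Icc 1 n, 0 < ∑ l ∈ range k, x l

theorem sum_range_add_period (x : Fin n → ℤ) (j : ℕ) :
    ∑ l ∈ range (j + n), x l = ∑ l ∈ range j, x l + ∑ i, x i := by
  rw [sum_range_add, ← Fin.sum_univ_eq_sum_range (fun l => x ((j + l : ℕ) : Fin n)),
    ← Equiv.sum_comp (Equiv.addLeft (j : Fin n)) x]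
  simp

theorem sum_range_rotate (x : Fin n → ℤ) (i : Fin n) (k : ℕ) :
    ∑ l ∈ range k, x (l + i) = ∑ l ∈ range (i + k), x l - ∑ l ∈ range i, x l := by
  rw [sum_range_add, add_sub_cancel_left]
  simp [add_comm]

theorem card_rotations_partialSumsPos_le [DecidablePred (PartialSumsPos (n := n))]
    (x : Fin n → ℤ) :
    #{i | PartialSumsPos fun j => x (j + i)} ≤ (∑ i, x i).toNat :=
  card_le_toNat_of_forall_lt_add (T := fun j => ∑ l ∈ range j, x l)
    (sum_range_add_period x) fun i hi k hk => by
      have := (mem_filter.mp hi).2 k hk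
      simp only [sum_range_rotate] at this
      omega

theorem sum_indicator_partialSumsPos_rotate_le {F : (Fin n → ℤ) → ℝ}
    (hFpos : ∀ x, 0 ≤ F x) (x : Fin n → ℤ) :
    ∑ i : Fin n, {y | PartialSumsPos fun j => y (j + i)}.indicator F x ≤
      {y | 0 < ∑ i, y i}.indicator (fun y => F y * ((min (∑ i, y i) n : ℤ) : ℝ)) x := by
  classical
  set c := #{i | PartialSumsPos fun j => x (j + i)}
  have hsum :
      ∑ i : Fin n, {y | PartialSumsPos fun j => y (j + i)}.indicator F x = c * F x := by
    simp [c, Set.indicator_apply, sum_ite]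
  have hc : c ≤ (∑ i, x i).toNat := card_rotations_partialSumsPos_le x
  have hcn : c ≤ n := (card_filter_le _ _).trans (by simp)
  rw [hsum]
  simp only [Set.indicator_apply, Set.mem_ofPred_eq]
  split_ifs with hs
  · rw [mul_comm]
    gcongr
    · exact hFpos x
    · exact_mod_cast le_min (by omega) (by omega)
  · simp [show c = 0 by omega]

theorem natCast_mul_setIntegral_partialSumsPos_le {ρ : Measure (Fin n → ℤ)}
    (hρ : ∀ i : Fin n, ρ.map (fun x j => x (j + i)) = ρ) {F : (Fin n → ℤ) → ℝ}
    (hFpos : ∀ x, 0 ≤ F x)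
    (hcyc : ∀ (x : Fin n → ℤ) (i : Fin n), F (fun j => x (j + i)) = F x) (hF : Integrable F ρ) :
    n * ∫ x in {x | PartialSumsPos x}, F x ∂ρ ≤
      ∫ x in {x | 0 < ∑ i, x i}, F x * ((min (∑ i, x i) n : ℤ) : ℝ) ∂ρ := by
  have hrotate (i : Fin n) : ∫ x in {x | PartialSumsPos fun j => x (j + i)}, F x ∂ρ =
      ∫ x in {x | PartialSumsPos x}, F x ∂ρ :=
    setIntegral_preimage_of_map_eq Measurable.of_discrete.aemeasurable (hρ i)
      (s := {x | PartialSumsPos x}) .of_discrete hF.1 (hcyc · i)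
  have hbound (x : Fin n → ℤ) : ‖{y | 0 < ∑ i, y i}.indicator
      (fun y => F y * ((min (∑ i, y i) n : ℤ) : ℝ)) x‖ ≤ n * F x := by
    simp only [Set.indicator_apply, Set.mem_ofPred_eq]
    split_ifs with hs
    · have hmin : (0 : ℝ) ≤ ((min (∑ i, x i) n : ℤ) : ℝ) := by
        exact_mod_cast le_min hs.le (by omega)
      rw [norm_mul, Real.norm_of_nonneg (hFpos x), Real.norm_of_nonneg hmin, mul_comm]
      gcongr
      · exact hFpos x
      · exact_mod_cast min_le_right _ _
    · simpa using mul_nonneg n.cast_nonneg (hFpos x)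
  calc (n : ℝ) * ∫ x in {x | PartialSumsPos x}, F x ∂ρ
      = ∑ i : Fin n, ∫ x in {x | PartialSumsPos fun j => x (j + i)}, F x ∂ρ := by
        simp [hrotate]
    _ = ∫ x, ∑ i : Fin n, {y | PartialSumsPos fun j => y (j + i)}.indicator F x ∂ρ := by
        rw [integral_finsetSum _ fun i _ => hF.indicator .of_discrete]
        simp only [integral_indicator MeasurableSet.of_discrete]
    _ ≤ _ := by
        rw [← integral_indicator .of_discrete]
        exact integral_mono (integrable_finsetSum _ fun i _ => hF.indicator .of_discrete)
          ((hF.const_mul n).mono' .of_discrete (.of_forall hbound))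
          (sum_indicator_partialSumsPos_rotate_le hFpos)

end Rotation

theorem cyclic_shift_expectation_le_general (n : ℕ) (hn : 1 ≤ n)
    {Ω : Type*} [MeasurableSpace Ω] (μ : Measure Ω)
    (ξ : ℕ → Ω → ℤ)
    (hindep : iIndepFun ξ μ)
    (hident : ∀ i j, IdentDistrib (ξ i) (ξ j) μ μ)
    (F : (Fin n → ℤ) → ℝ) (hFpos : ∀ x, 0 ≤ F x)
    (hcyc : ∀ (x : Fin n → ℤ) (i : Fin n), F (fun j => x (j + i)) = F x)
    (S : ℕ → Ω → ℤ) (hS : ∀ k ω, S k ω = ∑ l ∈ Finset.range k, ξ l ω)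
    (hInt : Integrable (fun ω => F fun i => ξ (i : ℕ) ω) μ) :
    ∫ ω in {ω | ∀ k ∈ Finset.Icc 1 n, 0 < S k ω}, F (fun i => ξ (i : ℕ) ω) ∂μ ≤
      (1 / n : ℝ) *
        ∫ ω in {ω | 0 < S n ω}, F (fun i => ξ (i : ℕ) ω) * ((min (S n ω) n : ℤ) : ℝ) ∂μ := by
  have : NeZero n := ⟨by omega⟩
  set X : Ω → Fin n → ℤ := fun ω i => ξ i ω
  have hX : AEMeasurable X μ := aemeasurable_pi_lambda _ fun i => (hident i i).aemeasurable_fst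
  have hSX {k} (hk : k ≤ n) (ω) : S k ω = ∑ l ∈ range k, X ω l := by
    rw [hS]
    exact sum_congr rfl fun l hl => by
      simp [X, Fin.val_cast_of_lt ((mem_range.mp hl).trans_le hk)]
  have hSn (ω) : S n ω = ∑ i, X ω i := by
    rw [hSX le_rfl, ← Fin.sum_univ_eq_sum_range (fun l : ℕ => X ω l)]
    simp
  have hρ (i : Fin n) : (μ.map X).map (fun x j => x (j + i)) = μ.map X := by
    rw [AEMeasurable.map_map_of_aemeasurable Measurable.of_discrete.aemeasurable hX]
    exact hindep.map_precomp_eq_of_identDistrib hident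
      (Fin.val_injective.comp (add_left_injective i)) Fin.val_injective
  have hpos : {ω | ∀ k ∈ Icc 1 n, 0 < S k ω} = X ⁻¹' {x | PartialSumsPos x} := by
    ext ω
    exact forall₂_congr fun k hk => by rw [hSX (mem_Icc.mp hk).2]
  have hmain := natCast_mul_setIntegral_partialSumsPos_le hρ hFpos hcyc
    ((integrable_map_measure .of_discrete hX).mpr hInt)
  rw [setIntegral_map .of_discrete .of_discrete hX,
    setIntegral_map .of_discrete .of_discrete hX] at hmain
  simp only [hSn]
  rw [hpos, one_div, inv_mul_eq_div, le_div_iff₀' (by exact_mod_cast hn)]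
  exact hmain

/-- Cyclic-shift lemma for expectations: if `ξ 1, …, ξ n` are i.i.d. with values in
`ℕ ∪ {−1}`, `S j` are the partial sums, and `F` is nonnegative, measurable and invariant
under cyclic shifts, then
`E[F(ξ) 1_{S_1>0,…,S_n>0}] ≤ (1/n) E[F(ξ) (S_n ⊓ n) 1_{S_n>0}]`. -/
theorem cyclic_shift_expectation_le (n : ℕ) (hn : 1 ≤ n)
    {Ω : Type*} [MeasurableSpace Ω] (μ : Measure Ω) [IsProbabilityMeasure μ]
    (ξ : ℕ → Ω → ℤ) (hmeas : ∀ i, Measurable (ξ i))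
    (hval : ∀ i ω, -1 ≤ ξ i ω)
    (hindep : iIndepFun ξ μ)
    (hident : ∀ i j, IdentDistrib (ξ i) (ξ j) μ μ)
    (F : (Fin n → ℤ) → ℝ) (hF : Measurable F) (hFpos : ∀ x, 0 ≤ F x)
    (hcyc : ∀ (x : Fin n → ℤ) (i : Fin n), F (fun j => x (j + i)) = F x)
    (S : ℕ → Ω → ℤ) (hS : ∀ k ω, S k ω = ∑ l ∈ Finset.range k, ξ l ω)
    (hInt : Integrable (fun ω => F fun i => ξ (i : ℕ) ω) μ) :
    ∫ ω in {ω | ∀ k ∈ Finset.Icc 1 n, 0 < S k ω}, F (fun i => ξ (i : ℕ) ω) ∂μ ≤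
      (1 / n : ℝ) *
        ∫ ω in {ω | 0 < S n ω}, F (fun i => ξ (i : ℕ) ω) * ((min (S n ω) n : ℤ) : ℝ) ∂μ :=
  cyclic_shift_expectation_le_general n hn μ ξ hindep hident F hFpos hcyc S hS hInt
end

section
/- Let x_1,...,x_n ∈ ℕ ∪ {−1} with partial sums s_j = x_1 + ... + x_j. The number of cyclic shifts i ∈ {0,...,n−1} of (x_1,...,x_n) for which all partial sums of the shifted sequence are strictly positive is at most min(s_n, n) when s_n > 0, and equals 0 when s_n ≤ 0. -/
open Finset
open Fin.NatCast

/-!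
Let `S` be the partial sums of the `n`-periodic extension of `x`, so that `S (m + n) = S m + K`
with `K` the total sum. Shift `i` is good exactly when `S i < S (i + m)` for `0 < m ≤ n`. For good
shifts `i ≤ j` this gives `S i ≤ S j < S (i + n) = S i + K` (strictly on the left when `i < j`),
so `S` is injective on the good shifts and maps them into an integer interval `[a, a + K)`:
there are at most `max K 0` of them.
-/

theorem Finset.card_le_toNat_of_strictMonoOn {α : Type*} [LinearOrder α] {s : Finset α}
    {f : α → ℤ} {K : ℤ} (hf : StrictMonoOn f s)
    (hK : ∀ i ∈ s, ∀ j ∈ s, i ≤ j → f j < f i + K) : #s ≤ K.toNat := by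
  rcases s.eq_empty_or_nonempty with rfl | hs
  · simp
  have hmaps : Set.MapsTo f s (Ico (f (s.min' hs)) (f (s.min' hs) + K)) := fun j hj =>
    mem_Ico.mpr ⟨hf.monotoneOn (s.min'_mem hs) hj (s.min'_le j hj),
      hK _ (s.min'_mem hs) j hj (s.min'_le j hj)⟩
  simpa using card_le_card_of_injOn f hmaps hf.injOn

def goodShifts {n : ℕ} (x : Fin n → ℤ) : Finset (Fin n) :=
  univ.filter fun i => ∀ k : Fin n, 0 < ∑ j ∈ univ.filter (fun j : Fin n => j ≤ k), x (j + i)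

section

variable {n : ℕ} [NeZero n]

theorem Fin.sum_filter_le_eq_sum_range {M : Type*} [AddCommMonoid M] (g : Fin n → M)
    (k : Fin n) : ∑ j ∈ univ.filter (· ≤ k), g j = ∑ t ∈ range (k + 1), g t := by
  rw [Nat.range_succ_eq_Iic, ← Fin.map_valEmbedding_Iic, sum_map, filter_ge_eq_Iic]
  simp

-- The cast `ℕ → Fin n` reduces modulo `n`.
def periodicPartialSum (x : Fin n → ℤ) (m : ℕ) : ℤ := ∑ t ∈ range m, x t

theorem periodicPartialSum_add (x : Fin n → ℤ) (m l : ℕ) :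
    periodicPartialSum x (m + l) = periodicPartialSum x m + ∑ t ∈ range l, x (t + m) := by
  simp only [periodicPartialSum, sum_range_add, Nat.cast_add, add_comm]

theorem periodicPartialSum_add_period (x : Fin n → ℤ) (m : ℕ) :
    periodicPartialSum x (m + n) = periodicPartialSum x m + ∑ j, x j := by
  rw [periodicPartialSum_add, ← Fin.sum_univ_eq_sum_range (fun t => x (t + m))]
  simpa using Equiv.sum_comp (Equiv.addRight (m : Fin n)) x

theorem periodicPartialSum_lt_add_of_mem_goodShifts {x : Fin n → ℤ} {i : Fin n}
    (hi : i ∈ goodShifts x) {m : ℕ} (hm₀ : 0 < m) (hmn : m ≤ n) :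
    periodicPartialSum x i < periodicPartialSum x (i + m) := by
  have hpos := (mem_filter.mp hi).2 ⟨m - 1, by omega⟩
  rw [Fin.sum_filter_le_eq_sum_range, Fin.val_mk, Nat.sub_add_cancel hm₀] at hpos
  rw [periodicPartialSum_add, Fin.cast_val_eq_self]
  exact lt_add_of_pos_right _ hpos

end

theorem card_goodShifts_le_toNat {n : ℕ} (x : Fin n → ℤ) :
    #(goodShifts x) ≤ (∑ j, x j).toNat := by
  rcases n.eq_zero_or_pos with rfl | hn
  · simp [goodShifts]
  have : NeZero n := ⟨hn.ne'⟩
  refine card_le_toNat_of_strictMonoOn (f := fun i : Fin n => periodicPartialSum x i)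
    (fun i hi j hj hij => ?_) fun i hi j hj hij => ?_
  · have := periodicPartialSum_lt_add_of_mem_goodShifts hi (m := j - i) (by omega) (by omega)
    rwa [Nat.add_sub_cancel' (by omega)] at this
  · have := periodicPartialSum_lt_add_of_mem_goodShifts hj (m := i + n - j) (by omega) (by omega)
    rwa [Nat.add_sub_cancel' (by omega), periodicPartialSum_add_period] at this

theorem cyclic_shift_count_general (n : ℕ) (x : Fin n → ℤ) :
    letI good : Finset (Fin n) :=
      Finset.univ.filter fun i =>
        ∀ k : Fin n, 0 < ∑ j ∈ Finset.univ.filter (fun j : Fin n => j ≤ k), x (j + i)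
    ((∑ j, x j ≤ 0) → good.card = 0) ∧
      (0 < ∑ j, x j → (good.card : ℤ) ≤ min (∑ j, x j) (n : ℤ)) := by
  have hcard := card_goodShifts_le_toNat x
  show (_ → #(goodShifts x) = 0) ∧ (_ → (#(goodShifts x) : ℤ) ≤ _)
  refine ⟨fun hK => ?_, fun hK => le_min ?_ ?_⟩
  · exact Nat.le_zero.mp (hcard.trans_eq (Int.toNat_eq_zero.mpr hK))
  · rw [← Int.toNat_of_nonneg hK.le]
    exact_mod_cast hcard
  · exact_mod_cast (card_le_univ (goodShifts x)).trans_eq (Fintype.card_fin n)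

/-- Deterministic cyclic-shift counting: for `x : Fin n → ℤ` with values in `ℕ ∪ {−1}`,
the number of cyclic shifts `i` such that all partial sums of the shifted sequence
`j ↦ x (j + i)` are strictly positive is `0` if the total sum is `≤ 0`, and is at most
`min (total sum) n` otherwise. -/
theorem cyclic_shift_count (n : ℕ) (x : Fin n → ℤ) (hval : ∀ i, -1 ≤ x i) :
    letI good : Finset (Fin n) :=
      Finset.univ.filter fun i =>
        ∀ k : Fin n, 0 < ∑ j ∈ Finset.univ.filter (fun j : Fin n => j ≤ k), x (j + i)
    ((∑ j, x j ≤ 0) → good.card = 0) ∧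
      (0 < ∑ j, x j → (good.card : ℤ) ≤ min (∑ j, x j) (n : ℤ)) :=
  cyclic_shift_count_general n x
end

section
/- Let S be a random walk with i.i.d. steps X_i − 1 where X_i are Poisson(1), conditioned on τ_{−1} = n+1 (first hitting time of −1 equals n+1). For pairwise distinct indices i_1,...,i_k ∈ {1,...,n}, one has i_1⋯i_k · E_n[X_{i_1}⋯X_{i_k}] ≤ E_n[(S_{i_1}+i_1)⋯(S_{i_k}+i_k)]. -/
open MeasureTheory ProbabilityTheory Finset
open scoped ENNReal

/-!
Since `S_i + i = X_1 + ⋯ + X_i`, the right-hand side expands into the sum, over the `i_1 ⋯ i_k`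
tuples `j` with `1 ≤ j_r ≤ i_r`, of `E_n[X_{j_1} ⋯ X_{j_k}]`, so it suffices that each of these
terms dominates `E_n[X_{i_1} ⋯ X_{i_k}]`. Indices are lowered one at a time. To lower `a = i_r`
to `b < a`, pair each step sequence with the one where `X_a` and `X_b` are exchanged: the i.i.d.
law is invariant under the exchange, and when `X_b ≤ X_a` the exchange only raises the walk
between times `b` and `a`, so it maps excursions to excursions. On each pair the inequality is
then the rearrangement inequality.
-/

theorem lintegral_le_lintegral_of_add_comp_le {α : Type*} [MeasurableSpace α] {μ : Measure α}
    {e : α → α} (he : MeasurePreserving e μ μ) {f g : α → ℝ≥0∞} (hf : Measurable f)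
    (hg : Measurable g) (h : ∀ x, g x + g (e x) ≤ f x + f (e x)) :
    ∫⁻ x, g x ∂μ ≤ ∫⁻ x, f x ∂μ := by
  have key : 2 * ∫⁻ x, g x ∂μ ≤ 2 * ∫⁻ x, f x ∂μ :=
    calc 2 * ∫⁻ x, g x ∂μ = ∫⁻ x, g x ∂μ + ∫⁻ x, g (e x) ∂μ := by
          rw [he.lintegral_comp hg, two_mul]
      _ ≤ ∫⁻ x, g x + g (e x) ∂μ := le_lintegral_add _ _
      _ ≤ ∫⁻ x, f x + f (e x) ∂μ := lintegral_mono h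
      _ = 2 * ∫⁻ x, f x ∂μ := by
          rw [lintegral_add_left hf, he.lintegral_comp hf, two_mul]
  exact (ENNReal.mul_le_mul_iff_right two_ne_zero ENNReal.ofNat_ne_top).1 key

theorem prod_le_prod_update {κ : Type*} [Fintype κ] [DecidableEq κ] (u : κ → ℕ) {r : κ} {c : ℕ}
    (h : u r ≤ c) : ∏ s, u s ≤ ∏ s, Function.update u r c s :=
  prod_le_prod' fun s _ => by
    rcases eq_or_ne s r with rfl | hs
    · simpa using h
    · simp [hs]

theorem prod_add_prod_le_prod_update_add_prod_update {κ : Type*} [Fintype κ] [DecidableEq κ]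
    (u v : κ → ℕ) (r : κ) (huv : ∀ s ≠ r, u s ≤ v s) (hvu : v r ≤ u r) :
    ∏ s, u s + ∏ s, v s ≤
      ∏ s, Function.update u r (v r) s + ∏ s, Function.update v r (u r) s := by
  have hrest : ∏ s ∈ univ \ {r}, u s ≤ ∏ s ∈ univ \ {r}, v s :=
    prod_le_prod' fun s hs => huv s (by simpa using hs)
  rw [prod_update_of_mem (mem_univ r), prod_update_of_mem (mem_univ r),
    prod_eq_mul_prod_sdiff_singleton_of_mem (mem_univ r) u,
    prod_eq_mul_prod_sdiff_singleton_of_mem (mem_univ r) v]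
  exact (mul_add_mul_le_mul_add_mul' hvu hrest).trans_eq (add_comm _ _)

section Exchange

variable {ι κ : Type*} [DecidableEq ι] [Fintype κ] [DecidableEq κ]

theorem indicator_prod_add_le_of_swap {G : Set (ι → ℕ)} {a b : ι}
    (hGswap : ∀ x ∈ G, x b ≤ x a → x ∘ Equiv.swap a b ∈ G)
    {T : κ → ι} {r : κ} (hTr : T r = a) (hT : ∀ s ≠ r, T s ≠ a) (x : ι → ℕ) (hx : x b ≤ x a) :
    G.indicator (fun y => ∏ s, (y (T s) : ℝ≥0∞)) x +
        G.indicator (fun y => ∏ s, (y (T s) : ℝ≥0∞)) (x ∘ Equiv.swap a b) ≤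
      G.indicator (fun y => ∏ s, (y (Function.update T r b s) : ℝ≥0∞)) x +
        G.indicator (fun y => ∏ s, (y (Function.update T r b s) : ℝ≥0∞)) (x ∘ Equiv.swap a b) := by
  set y := x ∘ Equiv.swap a b
  have hx' : x ∘ Function.update T r b = Function.update (x ∘ T) r ((y ∘ T) r) := by
    rw [Function.comp_update]; simp [y, hTr]
  have hy' : y ∘ Function.update T r b = Function.update (y ∘ T) r ((x ∘ T) r) := by
    rw [Function.comp_update]; simp [y, hTr]
  have hxy : ∀ s ≠ r, x (T s) ≤ y (T s) := by
    intro s hs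
    by_cases hsb : T s = b
    · simp [y, hsb, hx]
    · simp [y, Equiv.swap_apply_of_ne_of_ne (hT s hs) hsb]
  by_cases hxG : x ∈ G
  · have hyG : y ∈ G := hGswap x hxG hx
    simp only [Set.indicator_of_mem hxG, Set.indicator_of_mem hyG]
    have := prod_add_prod_le_prod_update_add_prod_update (x ∘ T) (y ∘ T) r hxy
      (by simp [y, hTr, hx])
    rw [← hx', ← hy'] at this
    exact_mod_cast this
  · simp only [Set.indicator_of_notMem hxG, zero_add]
    by_cases hyG : y ∈ G
    · simp only [Set.indicator_of_mem hyG]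
      have := prod_le_prod_update (y ∘ T) (r := r) (c := (x ∘ T) r) (by simp [y, hTr, hx])
      rw [← hy'] at this
      exact_mod_cast this
    · simp [Set.indicator_of_notMem hyG]

theorem setLIntegral_prod_le_setLIntegral_prod_update {ν : Measure (ι → ℕ)} {a b : ι}
    (hν : MeasurePreserving (fun x : ι → ℕ => x ∘ Equiv.swap a b) ν ν)
    {G : Set (ι → ℕ)} (hG : MeasurableSet G)
    (hGswap : ∀ x ∈ G, x b ≤ x a → x ∘ Equiv.swap a b ∈ G)
    {T : κ → ι} {r : κ} (hTr : T r = a) (hT : ∀ s ≠ r, T s ≠ a) :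
    ∫⁻ x in G, ∏ s, (x (T s) : ℝ≥0∞) ∂ν ≤
      ∫⁻ x in G, ∏ s, (x (Function.update T r b s) : ℝ≥0∞) ∂ν := by
  rw [← lintegral_indicator hG, ← lintegral_indicator hG]
  refine lintegral_le_lintegral_of_add_comp_le hν
    (Measurable.indicator (by fun_prop) hG) (Measurable.indicator (by fun_prop) hG) fun x => ?_
  rcases le_total (x b) (x a) with hx | hx
  · exact indicator_prod_add_le_of_swap hGswap hTr hT x hx
  · have hswap : x ∘ Equiv.swap a b ∘ Equiv.swap a b = x := by ext; simp
    have := indicator_prod_add_le_of_swap hGswap hTr hT (x ∘ Equiv.swap a b) (by simpa using hx)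
    rw [Function.comp_assoc, hswap] at this
    exact (add_comm _ _).trans_le (this.trans_eq (add_comm _ _))

end Exchange

theorem sInf_hitting_eq_succ_iff {S : ℕ → ℤ} (h0 : S 0 = 0) (hstep : ∀ m, S m - 1 ≤ S (m + 1))
    (n : ℕ) : sInf {m | 1 ≤ m ∧ S m = -1} = n + 1 ↔ (∀ m ≤ n, 0 ≤ S m) ∧ S (n + 1) = -1 := by
  constructor
  · intro h
    have hne : {m | 1 ≤ m ∧ S m = -1}.Nonempty :=
      Set.nonempty_iff_ne_empty.2 fun he => by simp [he] at h
    have hhit : S (n + 1) = -1 := (h ▸ Nat.sInf_mem hne).2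
    refine ⟨fun m hm => ?_, hhit⟩
    induction m with
    | zero => exact h0.ge
    | succ m ih =>
      have hlt : m + 1 < sInf {m | 1 ≤ m ∧ S m = -1} := by omega
      have hmiss : S (m + 1) ≠ -1 := fun hm' => Nat.notMem_of_lt_sInf hlt ⟨by omega, hm'⟩
      have := hstep m
      have := ih (by omega)
      omega
  · rintro ⟨hpos, hhit⟩
    refine IsLeast.csInf_eq ⟨⟨by omega, hhit⟩, fun m ⟨hm, hSm⟩ => ?_⟩
    by_contra! hlt
    have := hpos m (by omega)
    omega

def walk (x : ℕ → ℕ) (m : ℕ) : ℤ := ∑ j ∈ Icc 1 m, ((x j : ℤ) - 1)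

def excursions (n : ℕ) : Set (ℕ → ℕ) := {x | (∀ m ≤ n, 0 ≤ walk x m) ∧ walk x (n + 1) = -1}

theorem toNat_walk_add (x : ℕ → ℕ) (m : ℕ) : (walk x m + m).toNat = ∑ j ∈ Icc 1 m, x j := by
  simp [walk, sum_sub_distrib, ← Nat.cast_sum]

theorem mem_excursions_iff {x : ℕ → ℕ} {n : ℕ} :
    x ∈ excursions n ↔ sInf {m | 1 ≤ m ∧ walk x m = -1} = n + 1 :=
  (sInf_hitting_eq_succ_iff (by simp [walk]) (fun m => by
    rw [walk, walk, sum_Icc_succ_top (by omega)]; omega) n).symm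

theorem measurableSet_excursions (n : ℕ) : MeasurableSet (excursions n) := by
  have hwalk : ∀ m, Measurable fun x : ℕ → ℕ => walk x m := fun m => by
    unfold walk; fun_prop
  simp only [excursions, Set.ofPred_and, Set.ofPred_forall]
  exact (MeasurableSet.iInter fun m => MeasurableSet.iInter fun _ =>
    measurableSet_le measurable_const (hwalk m)).inter
      (measurableSet_eq_fun (hwalk _) measurable_const)

section Swap

variable {x : ℕ → ℕ} {a b : ℕ}

theorem walk_comp_swap_of_le (hb : 1 ≤ b) (hba : b ≤ a) {m : ℕ} (ham : a ≤ m) :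
    walk (x ∘ Equiv.swap a b) m = walk x m := by
  refine Equiv.Perm.sum_comp (Equiv.swap a b) (Icc 1 m) (fun j => (x j : ℤ) - 1) fun j hj => ?_
  have : j = a ∨ j = b := by
    by_contra! h
    exact hj (Equiv.swap_apply_of_ne_of_ne h.1 h.2)
  simp only [coe_Icc, Set.mem_Icc]
  omega

theorem walk_le_walk_comp_swap (hb : 1 ≤ b) (hba : b ≤ a) (hx : x b ≤ x a) (m : ℕ) :
    walk x m ≤ walk (x ∘ Equiv.swap a b) m := by
  rcases le_or_gt a m with ham | hma
  · exact (walk_comp_swap_of_le hb hba ham).ge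
  refine sum_le_sum fun j hj => ?_
  have hja : j ≠ a := by simp only [mem_Icc] at hj; omega
  rcases eq_or_ne j b with rfl | hjb
  · simpa using hx
  · simp [Equiv.swap_apply_of_ne_of_ne hja hjb]

theorem comp_swap_mem_excursions {n : ℕ} (hb : 1 ≤ b) (hba : b ≤ a) (ha : a ≤ n + 1)
    (hx : x ∈ excursions n) (hxab : x b ≤ x a) : x ∘ Equiv.swap a b ∈ excursions n :=
  ⟨fun m hm => (hx.1 m hm).trans (walk_le_walk_comp_swap hb hba hxab m),
    (walk_comp_swap_of_le hb hba ha).trans hx.2⟩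

end Swap

section ExchangeableLaw

variable {κ : Type*} [Fintype κ] [DecidableEq κ] {ν : Measure (ℕ → ℕ)} {n : ℕ}

theorem setLIntegral_excursions_prod_le
    (hν : ∀ σ : Equiv.Perm ℕ, MeasurePreserving (fun x : ℕ → ℕ => x ∘ σ) ν ν)
    {I J : κ → ℕ} (hI : Function.Injective I) (hIn : ∀ r, I r ≤ n + 1) (hJ : ∀ r, 1 ≤ J r)
    (hJI : ∀ r, J r ≤ I r) :
    ∫⁻ x in excursions n, ∏ r, (x (I r) : ℝ≥0∞) ∂ν ≤
      ∫⁻ x in excursions n, ∏ r, (x (J r) : ℝ≥0∞) ∂ν := by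
  induction hD : #{r | J r ≠ I r} using Nat.strong_induction_on generalizing J with
  | _ d ih =>
  rcases eq_empty_or_nonempty {r | J r ≠ I r} with hempty | hne
  · obtain rfl : J = I := funext fun r => by simpa using filter_eq_empty_iff.1 hempty (mem_univ r)
    exact le_rfl
  -- Taking `I r` maximal among the indices that still differ keeps `I r` out of the range of
  -- `J` elsewhere, as the exchange step requires.
  obtain ⟨r, hr, hmax⟩ := exists_max_image _ I hne
  have hrJ : J r < I r := lt_of_le_of_ne (hJI r) (by simpa using hr)
  set J' := Function.update J r (I r)
  have hJ'J : Function.update J' r (J r) = J := by simp [J']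
  have hJ's : ∀ s ≠ r, J' s = J s := fun s hs => Function.update_of_ne hs _ _
  calc ∫⁻ x in excursions n, ∏ s, (x (I s) : ℝ≥0∞) ∂ν
      ≤ ∫⁻ x in excursions n, ∏ s, (x (J' s) : ℝ≥0∞) ∂ν := by
        refine ih _ ?_ (fun s => ?_) (fun s => ?_) rfl
        · have : ({s | J' s ≠ I s} : Finset κ) = ({s | J s ≠ I s} : Finset κ).erase r := by
            ext s
            rcases eq_or_ne s r with rfl | hs
            · simp [J']
            · simp [hs, hJ's s hs]
          rw [this, card_erase_of_mem hr, ← hD]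
          exact Nat.pred_lt (card_ne_zero_of_mem hr)
        · rcases eq_or_ne s r with rfl | hs
          · simpa [J'] using (hJ s).trans hrJ.le
          · simpa [hJ's s hs] using hJ s
        · rcases eq_or_ne s r with rfl | hs
          · simp [J']
          · simpa [hJ's s hs] using hJI s
    _ ≤ ∫⁻ x in excursions n, ∏ s, (x (J s) : ℝ≥0∞) ∂ν := by
        conv_rhs => rw [← hJ'J]
        refine setLIntegral_prod_le_setLIntegral_prod_update (hν _) (measurableSet_excursions n)
          (fun x hx hxab => comp_swap_mem_excursions (hJ r) hrJ.le (hIn r) hx hxab)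
          (by simp [J']) fun s hs => ?_
        rw [hJ's s hs]
        by_cases hsD : J s = I s
        · exact hsD ▸ hI.ne hs
        · exact ((lt_of_le_of_ne (hJI s) hsD).trans_le (hmax s (by simpa using hsD))).ne

theorem prod_mul_setLIntegral_excursions_le
    (hν : ∀ σ : Equiv.Perm ℕ, MeasurePreserving (fun x : ℕ → ℕ => x ∘ σ) ν ν)
    {I : κ → ℕ} (hI : Function.Injective I) (hIn : ∀ r, I r ≤ n + 1) :
    (∏ r, (I r : ℝ≥0∞)) * ∫⁻ x in excursions n, ∏ r, (x (I r) : ℝ≥0∞) ∂ν ≤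
      ∫⁻ x in excursions n, ∏ r, ∑ j ∈ Icc 1 (I r), (x j : ℝ≥0∞) ∂ν := by
  simp_rw [prod_univ_sum]
  rw [lintegral_finsetSum _ fun J _ => by fun_prop]
  have hcard : ∏ r, (I r : ℝ≥0∞) = #(Fintype.piFinset fun r => Icc 1 (I r)) := by simp
  rw [hcard, ← nsmul_eq_mul]
  refine card_nsmul_le_sum _ _ _ fun J hJ => ?_
  have hJ' : ∀ r, J r ∈ Icc 1 (I r) := Fintype.mem_piFinset.1 hJ
  exact setLIntegral_excursions_prod_le hν hI hIn (fun r => (mem_Icc.1 (hJ' r)).1)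
    fun r => (mem_Icc.1 (hJ' r)).2

end ExchangeableLaw

theorem measurePreserving_comp_perm_infinitePi {ι α : Type*} [MeasurableSpace α]
    (p : Measure α) [IsProbabilityMeasure p] (σ : Equiv.Perm ι) :
    MeasurePreserving (fun x : ι → α => x ∘ σ) (Measure.infinitePi fun _ => p)
      (Measure.infinitePi fun _ => p) := by
  refine ⟨by fun_prop, ?_⟩
  have := Measure.infinitePi_map_piCongrLeft (fun _ : ι => p) σ.symm
  convert this using 2
  ext x i
  simp [MeasurableEquiv.coe_piCongrLeft, Equiv.piCongrLeft_apply_eq_cast]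

theorem conditioned_walk_product_bound_general
    {Ω : Type*} [MeasurableSpace Ω] (μ : Measure Ω)
    (X : ℕ → Ω → ℕ) (hmeas : ∀ i, Measurable (X i))
    (hindep : iIndepFun X μ)
    (hdist : ∀ i, Measure.map (X i) μ = poissonMeasure 1)
    (S : ℕ → Ω → ℤ) (hS : ∀ m ω, S m ω = ∑ j ∈ Finset.Icc 1 m, ((X j ω : ℤ) - 1))
    (τ : Ω → ℕ) (hτ : ∀ ω, τ ω = sInf {m | 1 ≤ m ∧ S m ω = -1})
    (n k : ℕ)
    (i : Fin k → ℕ) (hinj : Function.Injective i) (hi : ∀ r, i r ∈ Finset.Icc 1 n) :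
    (∏ r, (i r : ENNReal)) *
        ∫⁻ ω, ∏ r, (X (i r) ω : ENNReal) ∂(ProbabilityTheory.cond μ {ω | τ ω = n + 1}) ≤
      ∫⁻ ω, ∏ r, ((S (i r) ω + i r).toNat : ENNReal)
        ∂(ProbabilityTheory.cond μ {ω | τ ω = n + 1}) := by
  obtain rfl : S = fun m ω => walk (fun j => X j ω) m := funext fun m => funext (hS m)
  obtain rfl : τ = fun ω => sInf {m | 1 ≤ m ∧ walk (fun j => X j ω) m = -1} := funext hτ
  set Z : Ω → ℕ → ℕ := fun ω j => X j ω
  have hZ : Measurable Z := measurable_pi_lambda _ hmeas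
  have hlaw : μ.map Z = Measure.infinitePi fun _ => poissonMeasure 1 := by
    rw [hindep.map_fun_eq_infinitePi_map hmeas, funext hdist]
  have hevent : {ω | sInf {m | 1 ≤ m ∧ walk (Z ω) m = -1} = n + 1} = Z ⁻¹' excursions n := by
    ext ω; exact mem_excursions_iff.symm
  simp only [toNat_walk_add, Nat.cast_sum]
  rw [hevent, ProbabilityTheory.cond, lintegral_smul_measure, lintegral_smul_measure,
    smul_eq_mul, smul_eq_mul, mul_left_comm]
  gcongr
  have := prod_mul_setLIntegral_excursions_le (hlaw ▸ measurePreserving_comp_perm_infinitePi _)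
    hinj fun r => (mem_Icc.1 (hi r)).2.trans n.le_succ
  rwa [setLIntegral_map (measurableSet_excursions n) (by fun_prop) hZ,
    setLIntegral_map (measurableSet_excursions n) (by fun_prop) hZ] at this

/-- Monotonicity consequence for the Poisson walk conditioned to be an excursion:
for pairwise distinct indices `i 1, …, i k ∈ {1,…,n}`,
`i_1 ⋯ i_k · E_n[X_{i_1} ⋯ X_{i_k}] ≤ E_n[(S_{i_1}+i_1) ⋯ (S_{i_k}+i_k)]`,
where `E_n` is the expectation conditioned on `{τ_{−1} = n+1}` (expectations are
written as lower Lebesgue integrals of the nonnegative integrands). -/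
theorem conditioned_walk_product_bound
    {Ω : Type*} [MeasurableSpace Ω] (μ : Measure Ω) [IsProbabilityMeasure μ]
    (X : ℕ → Ω → ℕ) (hmeas : ∀ i, Measurable (X i))
    (hindep : iIndepFun X μ)
    (hdist : ∀ i, Measure.map (X i) μ = poissonMeasure 1)
    (S : ℕ → Ω → ℤ) (hS : ∀ m ω, S m ω = ∑ j ∈ Finset.Icc 1 m, ((X j ω : ℤ) - 1))
    (τ : Ω → ℕ) (hτ : ∀ ω, τ ω = sInf {m | 1 ≤ m ∧ S m ω = -1})
    (n k : ℕ) (hn : 1 ≤ n) (hk : 1 ≤ k)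
    (i : Fin k → ℕ) (hinj : Function.Injective i) (hi : ∀ r, i r ∈ Finset.Icc 1 n) :
    (∏ r, (i r : ENNReal)) *
        ∫⁻ ω, ∏ r, (X (i r) ω : ENNReal) ∂(ProbabilityTheory.cond μ {ω | τ ω = n + 1}) ≤
      ∫⁻ ω, ∏ r, ((S (i r) ω + i r).toNat : ENNReal)
        ∂(ProbabilityTheory.cond μ {ω | τ ω = n + 1}) :=
  conditioned_walk_product_bound_general μ X hmeas hindep hdist S hS τ hτ n k i hinj hi
end
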